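/- arXiv:1311.7507 — 5 statements merged into one kernel-verified Lean document; each statement's English description precedes it below -/
import Mathlib

section
/- Let F be an infinite field and let n ≥ 2 be an integer. Then there exist invertible matrices A, B ∈ M_n(F) such that the multiplicative commutator ABA⁻¹B⁻¹ is algebraic of degree exactly n over F, i.e., its minimal polynomial over F has degree n. -/
/-!
Take `A = diag(1, c, …, c^(n-1))` with `c ∉ {0, 1}` and `B = 1 + N`, where `N` is the nilpotent
lower shift. Conjugation by `A` scales `N` by `c`, so `A B A⁻¹ = 1 + c N` and the commutator is
`1 + (c - 1) N (1 + N)⁻¹`. Its difference with `1` is `N` times a scalar and a unit commuting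
with `N`, hence nilpotent of exact order `n`; so the minimal polynomial is `(X - 1)^n`.
-/

open Polynomial

namespace Matrix

def lowerShift (R : Type*) [Zero R] [One R] (n : ℕ) : Matrix (Fin n) (Fin n) R :=
  of fun i j => if (i : ℕ) = j + 1 then 1 else 0

variable {R : Type*} {n : ℕ}

theorem lowerShift_pow_apply [Semiring R] (k : ℕ) (i j : Fin n) :
    (lowerShift R n ^ k) i j = if (i : ℕ) = j + k then 1 else 0 := by
  induction k generalizing i with
  | zero => simp [one_apply, Fin.ext_iff]
  | succ k ih =>
    rw [pow_succ', mul_apply]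
    simp_rw [ih, lowerShift, of_apply, boole_mul]
    by_cases h : (i : ℕ) = j + (k + 1)
    · rw [Finset.sum_eq_single ⟨j + k, by omega⟩] <;> grind
    · exact (Finset.sum_eq_zero fun l _ => by grind).trans (if_neg h).symm

theorem lowerShift_pow_eq_zero_iff [Semiring R] [Nontrivial R] (k : ℕ) :
    lowerShift R n ^ k = 0 ↔ n ≤ k := by
  constructor
  · intro h
    by_contra hk
    have := congr_fun₂ h ⟨k, by omega⟩ ⟨0, by omega⟩
    simp [lowerShift_pow_apply] at this
  · intro hk
    ext i j
    rw [lowerShift_pow_apply, if_neg (by omega), zero_apply]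

theorem isNilpotent_lowerShift [Semiring R] : IsNilpotent (lowerShift R n) := by
  nontriviality R
  exact ⟨n, (lowerShift_pow_eq_zero_iff n).2 le_rfl⟩

theorem diagonal_pow_mul_lowerShift [CommSemiring R] (c : R) :
    diagonal (fun i : Fin n => c ^ (i : ℕ)) * lowerShift R n
      = c • (lowerShift R n * diagonal (fun i : Fin n => c ^ (i : ℕ))) := by
  ext i j
  simp only [diagonal_mul, mul_diagonal, lowerShift, of_apply, smul_apply, smul_eq_mul]
  split_ifs with h <;> simp [h, pow_succ']

end Matrix

section Algebra

variable {F B : Type*} [Field F] [Ring B] [Algebra F B]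

theorem minpoly_eq_X_sub_C_pow_of_pow_eq_zero_iff {x : B} {a : F} {n : ℕ}
    (hx : ∀ k, (x - algebraMap F B a) ^ k = 0 ↔ n ≤ k) : minpoly F x = (X - C a) ^ n := by
  have hXn : aeval x ((X - C a) ^ n) = 0 := by simp [(hx n).2 le_rfl]
  obtain ⟨i, hin, hassoc⟩ := (dvd_prime_pow (prime_X_sub_C a) n).1 (minpoly.dvd F x hXn)
  have hmin : minpoly F x = (X - C a) ^ i :=
    eq_of_monic_of_associated (minpoly.monic ⟨_, (monic_X_sub_C a).pow n, hXn⟩)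
      ((monic_X_sub_C a).pow i) hassoc
  have hni : n ≤ i := (hx i).1 (by simpa [hmin] using minpoly.aeval F x)
  rw [hmin, le_antisymm hin hni]

theorem smul_mul_pow_eq_zero_iff {a : F} (ha : a ≠ 0) {x u : B} (hu : IsUnit u)
    (hxu : Commute x u) (k : ℕ) : (a • (x * u)) ^ k = 0 ↔ x ^ k = 0 := by
  rw [_root_.smul_pow, hxu.mul_pow, smul_eq_zero, (hu.pow k).mul_left_eq_zero]
  simp [ha]

theorem mul_one_add_mul_inverse_mul_inverse_sub_one {c : F} {a x : B} (ha : IsUnit a)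
    (hx : IsUnit (1 + x)) (hax : a * x = c • (x * a)) :
    a * (1 + x) * Ring.inverse a * Ring.inverse (1 + x) - 1
      = (c - 1) • (x * Ring.inverse (1 + x)) := by
  have hconj : a * (1 + x) * Ring.inverse a = 1 + c • x := by
    rw [mul_one_add, hax, ← smul_mul_assoc, ← one_add_mul, Ring.mul_inverse_cancel_right _ _ ha]
  rw [hconj]
  calc (1 + c • x) * Ring.inverse (1 + x) - 1
      = (1 + c • x - (1 + x)) * Ring.inverse (1 + x) := by
        rw [sub_mul, Ring.mul_inverse_cancel _ hx]
    _ = (c - 1) • (x * Ring.inverse (1 + x)) := by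
        rw [← smul_mul_assoc, sub_smul, one_smul]; congr 1; abel

end Algebra

open Matrix

theorem exists_mul_commutator_minpoly_natDegree_eq_general
    (F : Type*) [Field F] [Infinite F] (n : ℕ) :
    ∃ A B : Matrix (Fin n) (Fin n) F, IsUnit A ∧ IsUnit B ∧
      (minpoly F (A * B * A⁻¹ * B⁻¹)).natDegree = n := by
  classical
  obtain ⟨c, hc⟩ := Infinite.exists_notMem_finset ({0, 1} : Finset F)
  have hc0 : c ≠ 0 := fun h => hc (by simp [h])
  have hc1 : c - 1 ≠ 0 := sub_ne_zero.2 fun h => hc (by simp [h])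
  set A := diagonal fun i : Fin n => c ^ (i : ℕ)
  set N := lowerShift F n
  have hA : IsUnit A := isUnit_diagonal.2 (Pi.isUnit_iff.2 fun _ => (pow_ne_zero _ hc0).isUnit)
  have hB : IsUnit (1 + N) := isNilpotent_lowerShift.isUnit_one_add
  have hcomm : Commute N (Ring.inverse (1 + N)) := by
    rw [← hB.unit_spec, Ring.inverse_unit]
    exact ((Commute.one_right N).add_right (Commute.refl N)).units_inv_right
  have hunipotent : ∀ k, (A * (1 + N) * A⁻¹ * (1 + N)⁻¹ - algebraMap F _ 1) ^ k = 0 ↔ n ≤ k := by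
    intro k
    rw [map_one, nonsing_inv_eq_ringInverse, nonsing_inv_eq_ringInverse,
      mul_one_add_mul_inverse_mul_inverse_sub_one hA hB (diagonal_pow_mul_lowerShift c),
      smul_mul_pow_eq_zero_iff hc1 hB.ringInverse hcomm, lowerShift_pow_eq_zero_iff]
  refine ⟨A, 1 + N, hA, hB, ?_⟩
  rw [minpoly_eq_X_sub_C_pow_of_pow_eq_zero_iff hunipotent, (monic_X_sub_C 1).natDegree_pow,
    natDegree_X_sub_C, mul_one]

/-- **Lemma (Bien, Lemma 3.1).** Let `F` be an infinite field and `n ≥ 2` an integer.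
Then there exist invertible matrices `A B : Matrix (Fin n) (Fin n) F` such that the
multiplicative commutator `A * B * A⁻¹ * B⁻¹` is algebraic of degree exactly `n` over
`F`, i.e. its minimal polynomial over `F` has degree `n`. -/
theorem exists_mul_commutator_minpoly_natDegree_eq
    (F : Type*) [Field F] [Infinite F] (n : ℕ) (hn : 2 ≤ n) :
    ∃ A B : Matrix (Fin n) (Fin n) F, IsUnit A ∧ IsUnit B ∧
      (minpoly F (A * B * A⁻¹ * B⁻¹)).natDegree = n :=
  exists_mul_commutator_minpoly_natDegree_eq_general F n
end

section
/- Let F be an infinite field and let n > 2 be an integer. Then there exist matrices A, B ∈ M_n(F) such that the additive commutator AB − BA is algebraic of degree exactly n over F, i.e., its minimal polynomial over F has degree n. -/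
/-!
The nilpotent Jordan block `N` (ones on the superdiagonal) is its own commutator with
`D = diag(0, 1, …, n - 1)`, because `(N * D - D * N) i j = N i j * (j - i)` and `N` lives where
`j - i = 1`. Its minimal polynomial is `X ^ n`: it divides `X ^ n` as `N ^ n = 0`, so it is some
`X ^ k`, and `N ^ k ≠ 0` for `k < n`.
-/

open Polynomial Matrix

theorem minpoly_eq_X_pow_of_pow_eq_zero {K A : Type*} [Field K] [Ring A] [Algebra K A]
    {x : A} {n : ℕ} (hx : x ^ n = 0) (hlt : ∀ k < n, x ^ k ≠ 0) : minpoly K x = X ^ n := by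
  have hint : IsIntegral K x := ⟨X ^ n, monic_X_pow n, by simp [hx]⟩
  obtain ⟨i, hin, hassoc⟩ := (dvd_prime_pow prime_X n).1 (minpoly.dvd K x (by simp [hx]))
  have hi : minpoly K x = X ^ i :=
    eq_of_monic_of_associated (minpoly.monic hint) (monic_X_pow i) hassoc
  have hxi : x ^ i = 0 := by simpa [hi] using minpoly.aeval K x
  obtain rfl : i = n := le_antisymm hin (not_lt.1 fun h => hlt i h hxi)
  exact hi

namespace Matrix

theorem mul_diagonal_sub_diagonal_mul_apply {R m : Type*} [CommRing R] [Fintype m]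
    [DecidableEq m] (M : Matrix m m R) (d : m → R) (i j : m) :
    (M * diagonal d - diagonal d * M) i j = M i j * (d j - d i) := by
  simp only [sub_apply, mul_diagonal, diagonal_mul]
  ring

variable (R : Type*) (n : ℕ)

def shiftUp [Zero R] [One R] : Matrix (Fin n) (Fin n) R :=
  of fun i j => if (j : ℕ) = i + 1 then 1 else 0

theorem shiftUp_pow [Semiring R] (k : ℕ) :
    shiftUp R n ^ k = of fun i j : Fin n => if (j : ℕ) = i + k then 1 else 0 := by
  induction k with
  | zero => ext i j; simp [one_apply, Fin.ext_iff, eq_comm]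
  | succ k ih =>
    ext i j
    rw [pow_succ, ih, mul_apply]
    by_cases h : (i : ℕ) + k < n
    · rw [Finset.sum_eq_single ⟨i + k, h⟩ (fun l _ hl => by simp [Fin.ext_iff] at hl; simp [hl])
        (by simp)]
      simp [shiftUp, add_assoc]
    · have hl : ∀ l : Fin n, (l : ℕ) ≠ i + k := fun l hl => h (hl ▸ l.isLt)
      have hj : (j : ℕ) ≠ i + (k + 1) := by omega
      simp [hl, hj]

theorem shiftUp_pow_self [Semiring R] : shiftUp R n ^ n = 0 := by
  ext i j
  simp [shiftUp_pow, show (j : ℕ) ≠ i + n by omega]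

theorem shiftUp_pow_ne_zero [Semiring R] [Nontrivial R] {k : ℕ} (hk : k < n) :
    shiftUp R n ^ k ≠ 0 := by
  intro h
  simpa [shiftUp_pow] using congr_fun₂ h ⟨0, by omega⟩ ⟨k, hk⟩

theorem minpoly_shiftUp (K : Type*) [Field K] : minpoly K (shiftUp K n) = X ^ n :=
  minpoly_eq_X_pow_of_pow_eq_zero (shiftUp_pow_self K n) fun _ => shiftUp_pow_ne_zero K n

theorem shiftUp_mul_diagonal_sub_diagonal_mul [CommRing R] :
    shiftUp R n * diagonal (fun i : Fin n => ((i : ℕ) : R))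
      - diagonal (fun i : Fin n => ((i : ℕ) : R)) * shiftUp R n = shiftUp R n := by
  ext i j
  rw [mul_diagonal_sub_diagonal_mul_apply]
  by_cases h : (j : ℕ) = i + 1 <;> simp [shiftUp, h]

end Matrix

theorem exists_add_commutator_minpoly_natDegree_eq_general
    (F : Type*) [Field F] (n : ℕ) :
    ∃ A B : Matrix (Fin n) (Fin n) F,
      (minpoly F (A * B - B * A)).natDegree = n :=
  ⟨shiftUp F n, diagonal fun i => ((i : ℕ) : F), by
    rw [shiftUp_mul_diagonal_sub_diagonal_mul, minpoly_shiftUp, natDegree_X_pow]⟩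

/-- **Lemma (Bien, Lemma 3.3).** Let `F` be an infinite field and `n > 2` an integer.
Then there exist matrices `A B : Matrix (Fin n) (Fin n) F` such that the additive
commutator `A * B - B * A` is algebraic of degree exactly `n` over `F`, i.e. its
minimal polynomial over `F` has degree `n`. -/
theorem exists_add_commutator_minpoly_natDegree_eq
    (F : Type*) [Field F] [Infinite F] (n : ℕ) (hn : 2 < n) :
    ∃ A B : Matrix (Fin n) (Fin n) F,
      (minpoly F (A * B - B * A)).natDegree = n :=
  exists_add_commutator_minpoly_natDegree_eq_general F n
end

section
/- Let F be a field and let m be a positive integer. Then for every matrix A ∈ M_m(F) and all matrices R_1, R_2, …, R_m ∈ M_m(F), one has g_m(A, R_1, R_2, …, R_m) = 0; in other words, g_m is a generalized polynomial identity of M_m(F). -/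
/-- The generalized polynomial
`g_n(a, r_1, …, r_n) = Σ_{δ ∈ S_{n+1}} sign(δ) · a^{δ 0} * r_1 * a^{δ 1} * ⋯ * r_n * a^{δ n}`,
where the sum runs over all permutations `δ` of `{0, 1, …, n}`. -/
def gExpr {R : Type*} [Ring R] (n : ℕ) (a : R) (r : Fin n → R) : R :=
  ∑ δ : Equiv.Perm (Fin (n + 1)),
    (Equiv.Perm.sign δ : ℤ) •
      (a ^ ((δ 0 : Fin (n + 1)) : ℕ) *
        (List.ofFn fun i : Fin n => r i * a ^ ((δ i.succ : Fin (n + 1)) : ℕ)).prod)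

/-! `g_n(a, r)` is the alternatization of the multilinear map
`(v_0, …, v_n) ↦ v_0 r_1 v_1 ⋯ r_n v_n`, evaluated at `(1, a, …, a^n)`. An alternating map
vanishes on linearly dependent families, and by Cayley–Hamilton the powers `1, A, …, A^m` of an
`m × m` matrix are linearly dependent. -/

section Alternatization

variable (K : Type*) [CommRing K] {M : Type*} [Ring M] [Algebra K M]

def interleavedProd (n : ℕ) (c : Fin n → M) : MultilinearMap K (fun _ : Fin n => M) M :=
  (MultilinearMap.mkPiAlgebraFin K n M).compLinearMap fun i => LinearMap.mulLeft K (c i)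

theorem interleavedProd_apply (n : ℕ) (c v : Fin n → M) :
    interleavedProd K n c v = (List.ofFn fun i => c i * v i).prod := by
  simp [interleavedProd]

theorem gExpr_eq_alternatization (n : ℕ) (a : M) (r : Fin n → M) :
    gExpr n a r =
      (interleavedProd K (n + 1) (Fin.cons 1 r)).alternatization fun i => a ^ (i : ℕ) := by
  rw [MultilinearMap.alternatization_apply, gExpr]
  refine Finset.sum_congr rfl fun δ _ => ?_
  rw [MultilinearMap.domDomCongr_apply, interleavedProd_apply, Units.smul_def]
  simp [List.ofFn_succ]

end Alternatization

theorem gExpr_eq_zero_of_not_linearIndependent {K M : Type*} [CommRing K] [IsDomain K] [Ring M]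
    [Algebra K M] [Module.IsTorsionFree K M] {n : ℕ} {a : M} (r : Fin n → M)
    (h : ¬LinearIndependent K fun i : Fin (n + 1) => a ^ (i : ℕ)) : gExpr n a r = 0 := by
  rw [gExpr_eq_alternatization K]
  exact AlternatingMap.map_linearDependent _ _ h

theorem Matrix.not_linearIndependent_pow {R : Type*} [CommRing R] [Nontrivial R] {m : ℕ}
    (A : Matrix (Fin m) (Fin m) R) :
    ¬LinearIndependent R fun i : Fin (m + 1) => A ^ (i : ℕ) := by
  have hdeg : A.charpoly.natDegree = m := by simp
  rw [Fintype.not_linearIndependent_iff]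
  refine ⟨fun i => A.charpoly.coeff i, ?_, Fin.last m, ?_⟩
  · have h := A.aeval_self_charpoly
    rwa [Polynomial.aeval_eq_sum_range, hdeg, ← Fin.sum_univ_eq_sum_range] at h
  · have hlead : A.charpoly.coeff m = 1 :=
      (congrArg A.charpoly.coeff hdeg).symm.trans A.charpoly_monic.coeff_natDegree
    simp [hlead]

theorem gExpr_eq_zero_matrix_general
    (F : Type*) [Field F] (m : ℕ)
    (A : Matrix (Fin m) (Fin m) F) (R : Fin m → Matrix (Fin m) (Fin m) F) :
    gExpr m A R = 0 :=
  gExpr_eq_zero_of_not_linearIndependent R A.not_linearIndependent_pow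

/-- **Fact.** For any field `F` and positive integer `m`, the expression `g_m` is a
generalized polynomial identity of the matrix ring `M_m(F)`: for every matrix `A` and
all matrices `R_1, …, R_m` over `F`, one has `g_m(A, R_1, …, R_m) = 0`. -/
theorem gExpr_eq_zero_matrix
    (F : Type*) [Field F] (m : ℕ) (hm : 0 < m)
    (A : Matrix (Fin m) (Fin m) F) (R : Fin m → Matrix (Fin m) (Fin m) F) :
    gExpr m A R = 0 :=
  gExpr_eq_zero_matrix_general F m A R
end

section
/- Let D be a division ring whose center is the field F, with dim_F D = n² finite (so D has degree n over F), and let K be a subfield of D containing F. Then dim_F K ≤ n, and equality dim_F K = n holds if and only if K is a maximal subfield of D. -/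
/-!
For an `F`-subalgebra `A` of the central division algebra `D` with centralizer `C`, the action
`a ⊗ b ↦ (x ↦ a * x * b)` identifies `A ⊗[F] Dᵐᵒᵖ` with `End_C D`: injectivity is Artin's
independence argument, and surjectivity is the Jacobson density theorem, since the endomorphisms
of `D` commuting with this action are the left multiplications by `C`. Counting dimensions gives
`dim A * dim C = dim D = n ^ 2`. A commutative `K` lies in its centralizer, so
`(dim K) ^ 2 ≤ n ^ 2`, with equality iff `C = K`; and `C = K` iff `K` is maximal, because for
`u ∈ C` the double centralizer of `K ∪ {u}` is a commutative subfield containing both.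
-/

open Module TensorProduct

section

variable {F D : Type*} [Field F] [DivisionRing D] [Algebra F D]

theorem Algebra.IsCentral.eq_zero_of_forall_sum_mul_mul_eq_zero [Algebra.IsCentral F D]
    {ι : Type*} {a : ι → D} (ha : LinearIndependent F a) (s : Finset ι) {b : ι → D}
    (h : ∀ x, ∑ i ∈ s, a i * x * b i = 0) : ∀ i ∈ s, b i = 0 := by
  -- After scaling so that `b j = 1`, the commutators `y * b i - b i * y` satisfy a shorter
  -- relation, so every `b i` is central, i.e. a scalar; `x = 1` then contradicts independence.
  classical
  induction s using Finset.strongInduction generalizing b with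
  | H s ih =>
  by_contra! ⟨j, hj, hbj⟩
  set c := fun i => b i * (b j)⁻¹ with hc_def
  have hc : ∀ x, ∑ i ∈ s, a i * x * c i = 0 := fun x => by
    simp only [hc_def, ← mul_assoc, ← Finset.sum_mul, h, zero_mul]
  have hcj : c j = 1 := mul_inv_cancel₀ hbj
  have hcentral : ∀ i ∈ s.erase j, c i ∈ Subalgebra.center F D := by
    intro i hi
    refine Subalgebra.mem_center_iff.mpr fun y => sub_eq_zero.mp ?_
    refine ih _ (Finset.erase_ssubset hj) (b := fun i => y * c i - c i * y) (fun x => ?_) i hi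
    rw [Finset.sum_erase _ (by simp [hcj])]
    calc ∑ i ∈ s, a i * x * (y * c i - c i * y)
        = ∑ i ∈ s, a i * (x * y) * c i - (∑ i ∈ s, a i * x * c i) * y := by
          simp only [mul_sub, Finset.sum_sub_distrib, Finset.sum_mul, mul_assoc]
      _ = 0 := by rw [hc, hc, zero_mul, sub_zero]
  have hscalar : ∀ i ∈ s, ∃ k : F, c i = algebraMap F D k := by
    intro i hi
    by_cases hij : i = j
    · exact ⟨1, by rw [hij, hcj, map_one]⟩
    · exact (Algebra.IsCentral.mem_center_iff F).mp
        (hcentral i (Finset.mem_erase.mpr ⟨hij, hi⟩))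
  choose! k hk using hscalar
  have hk0 := linearIndependent_iff'.mp ha s k (by
    rw [← hc 1]
    refine Finset.sum_congr rfl fun i hi => ?_
    rw [hk i hi, mul_one, Algebra.smul_def, Algebra.commutes]) j hj
  have := hk j hj
  rw [hcj, hk0, map_zero] at this
  exact one_ne_zero this

theorem Algebra.IsCentral.mulLeftRight_injective [Algebra.IsCentral F D] :
    Function.Injective (AlgHom.mulLeftRight F D) := by
  refine (injective_iff_map_eq_zero _).mpr fun t ht => ?_
  let κ := Basis.ofVectorSpace F D
  obtain ⟨β, rfl⟩ := TensorProduct.eq_repr_basis_left κ t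
  suffices β = 0 by simp [this]
  have hβ := eq_zero_of_forall_sum_mul_mul_eq_zero κ.linearIndependent β.support
    (b := fun i => (β i).unop) fun x => by
      simpa [Finsupp.sum, map_sum] using LinearMap.congr_fun ht x
  ext i
  by_cases hi : i ∈ β.support
  · exact MulOpposite.unop_injective (hβ i hi)
  · exact Finsupp.notMem_support_iff.mp hi

namespace Subalgebra

variable (A : Subalgebra F D)

noncomputable def mulLeftRight : A ⊗[F] Dᵐᵒᵖ →ₐ[F] Module.End F D :=
  (AlgHom.mulLeftRight F D).comp (Algebra.TensorProduct.map A.val (AlgHom.id F Dᵐᵒᵖ))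

@[simp]
lemma mulLeftRight_tmul (a : A) (b : Dᵐᵒᵖ) (x : D) :
    A.mulLeftRight (a ⊗ₜ b) x = a * x * b.unop := by
  simp [mulLeftRight]

lemma mulLeftRight_injective [Algebra.IsCentral F D] : Function.Injective A.mulLeftRight :=
  Algebra.IsCentral.mulLeftRight_injective.comp
    (Module.Flat.rTensor_preserves_injective_linearMap A.val.toLinearMap Subtype.val_injective)

lemma mulLeftRight_apply_centralizer_mul (t : A ⊗[F] Dᵐᵒᵖ) {c : D}
    (hc : c ∈ centralizer F (A : Set D)) (x : D) :
    A.mulLeftRight t (c * x) = c * A.mulLeftRight t x := by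
  induction t using TensorProduct.induction_on with
  | zero => simp
  | tmul a b => simp only [mulLeftRight_tmul, ← mul_assoc, (mem_centralizer_iff F).mp hc a a.2]
  | add t u ht hu => simp only [map_add, LinearMap.add_apply, ht, hu, mul_add]

lemma end_range_mulLeftRight_apply_mulLeftRight (g : Module.End A.mulLeftRight.range D)
    (t : A ⊗[F] Dᵐᵒᵖ) (x : D) : g (A.mulLeftRight t x) = A.mulLeftRight t (g x) :=
  g.map_smul ⟨_, t, rfl⟩ x

lemma end_range_mulLeftRight_apply_eq_mul (g : Module.End A.mulLeftRight.range D) (x : D) :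
    g x = g 1 * x := by
  simpa using end_range_mulLeftRight_apply_mulLeftRight A g (1 ⊗ₜ MulOpposite.op x) 1

lemma end_range_mulLeftRight_apply_one_mem_centralizer
    (g : Module.End A.mulLeftRight.range D) : g 1 ∈ centralizer F (A : Set D) := by
  refine (mem_centralizer_iff F).mpr fun a ha => ?_
  have := end_range_mulLeftRight_apply_mulLeftRight A g (⟨a, ha⟩ ⊗ₜ 1) 1
  simp only [mulLeftRight_tmul, mul_one, MulOpposite.unop_one] at this
  rw [← this, end_range_mulLeftRight_apply_eq_mul]

instance isSimpleModule_range_mulLeftRight : IsSimpleModule A.mulLeftRight.range D := by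
  refine isSimpleModule_iff_toSpanSingleton_surjective.mpr ⟨inferInstance, fun x hx y => ?_⟩
  refine ⟨⟨_, 1 ⊗ₜ MulOpposite.op (x⁻¹ * y), rfl⟩, ?_⟩
  simp [Subalgebra.smul_def, mul_inv_cancel_left₀ hx]

noncomputable def toEndCentralizer :
    A ⊗[F] Dᵐᵒᵖ →ₗ[F] Module.End (centralizer F (A : Set D)) D where
  toFun t :=
    { toFun := A.mulLeftRight t
      map_add' := map_add _
      map_smul' := fun c x => A.mulLeftRight_apply_centralizer_mul t c.2 x }
  map_add' t u := by ext; simp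
  map_smul' k t := by ext; simp

lemma toEndCentralizer_injective [Algebra.IsCentral F D] :
    Function.Injective A.toEndCentralizer :=
  fun _ _ h => A.mulLeftRight_injective (LinearMap.ext fun x => LinearMap.congr_fun h x)

lemma toEndCentralizer_surjective [FiniteDimensional F D] :
    Function.Surjective A.toEndCentralizer := by
  intro f
  let C := centralizer F (A : Set D)
  have : Module.Finite C D := Module.Finite.of_restrictScalars_finite F C D
  obtain ⟨s, hs⟩ := Module.Finite.fg_top (R := C) (M := D)
  obtain ⟨⟨_, t, rfl⟩, ht⟩ := jacobson_density (R := A.mulLeftRight.range)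
    { toFun := f
      map_add' := f.map_add
      map_smul' := fun g x => by
        change f (g x) = g (f x)
        rw [end_range_mulLeftRight_apply_eq_mul A g x,
          end_range_mulLeftRight_apply_eq_mul A g (f x)]
        exact f.map_smul ⟨g 1, end_range_mulLeftRight_apply_one_mem_centralizer A g⟩ x } s
  exact ⟨t, LinearMap.ext_on hs fun m hm => (ht m hm).symm⟩

lemma le_centralizer_of_commute (hA : ∀ x ∈ A, ∀ y ∈ A, x * y = y * x) :
    A ≤ centralizer F (A : Set D) :=
  fun y hy => (mem_centralizer_iff F).mpr fun x hx => hA x hx y hy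

theorem finrank_mul_finrank_centralizer [Algebra.IsCentral F D] [FiniteDimensional F D] :
    finrank F A * finrank F (centralizer F (A : Set D)) = finrank F D := by
  let C := centralizer F (A : Set D)
  let := divisionRingOfFiniteDimensional F C
  have : Module.Finite C D := Module.Finite.of_restrictScalars_finite F C D
  have hEnd : finrank F (Module.End C D) = finrank C D * finrank F D := by
    rw [← ((Module.finBasis C D).constr F).finrank_eq, Module.finrank_pi_fintype,
      Finset.sum_const, Finset.card_univ, Fintype.card_fin, smul_eq_mul]
  have hTensor : finrank F (A ⊗[F] Dᵐᵒᵖ) = finrank F A * finrank F D := by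
    rw [Module.finrank_tensorProduct, (MulOpposite.opLinearEquiv F).finrank_eq.symm]
  have hA : finrank F A = finrank C D := by
    refine Nat.eq_of_mul_eq_mul_right (finrank_pos (R := F) (M := D)) ?_
    rw [← hTensor, ← hEnd]
    exact (LinearEquiv.ofBijective A.toEndCentralizer
      ⟨A.toEndCentralizer_injective, A.toEndCentralizer_surjective⟩).finrank_eq
  rw [hA, mul_comm, finrank_mul_finrank F C D]

variable {A} [Algebra.IsCentral F D] [FiniteDimensional F D] {n : ℕ}

theorem finrank_le_of_commute (hA : ∀ x ∈ A, ∀ y ∈ A, x * y = y * x)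
    (hn : finrank F D = n ^ 2) : finrank F A ≤ n := by
  refine (Nat.pow_le_pow_iff_left two_ne_zero).mp ?_
  calc finrank F A ^ 2 = finrank F A * finrank F A := sq _
    _ ≤ finrank F A * finrank F (centralizer F (A : Set D)) :=
      Nat.mul_le_mul_left _
        (Submodule.finrank_mono (toSubmodule.monotone (le_centralizer_of_commute A hA)))
    _ = n ^ 2 := by rw [finrank_mul_finrank_centralizer, hn]

theorem finrank_eq_iff_centralizer_le (hA : ∀ x ∈ A, ∀ y ∈ A, x * y = y * x)
    (hn : finrank F D = n ^ 2) : finrank F A = n ↔ centralizer F (A : Set D) ≤ A := by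
  have hle := le_centralizer_of_commute A hA
  have hprod := A.finrank_mul_finrank_centralizer
  constructor
  · intro hk
    have hc : finrank F A * finrank F (centralizer F (A : Set D)) =
        finrank F A * finrank F A := by
      rw [hprod, hn, hk, sq]
    exact (eq_of_le_of_finrank_eq hle (Nat.eq_of_mul_eq_mul_left finrank_pos hc).symm).ge
  · intro hC
    rw [le_antisymm hC hle, ← sq, hn] at hprod
    exact Nat.pow_left_injective two_ne_zero hprod

end Subalgebra

end

namespace Subfield

variable {R D : Type*} [DivisionRing D]

def centralizer (s : Set D) : Subfield D :=
  { Subring.centralizer s with inv_mem' := fun _ => Set.inv_mem_centralizer₀ }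

variable [CommSemiring R] [Algebra R D]

def toSubalgebra (K : Subfield D) (hK : Set.range (algebraMap R D) ⊆ K) : Subalgebra R D :=
  { K.toSubsemiring with algebraMap_mem' := fun c => hK ⟨c, rfl⟩ }

lemma finrank_toSubalgebra (K : Subfield D) (hK : Set.range (algebraMap R D) ⊆ K) [Module R K]
    (hsmul : ∀ (c : R) (x : K), ((c • x : K) : D) = c • (x : D)) :
    finrank R K = finrank R (K.toSubalgebra hK) :=
  LinearEquiv.finrank_eq
    { toFun := fun x => ⟨x, x.2⟩
      invFun := fun x => ⟨x, x.2⟩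
      map_add' := fun _ _ => rfl
      map_smul' := fun c x => Subtype.ext (hsmul c x)
      left_inv := fun _ => rfl
      right_inv := fun _ => rfl }

lemma maximal_iff_centralizer_subset (K : Subfield D) (hK : Set.range (algebraMap R D) ⊆ K)
    (hKcomm : ∀ x ∈ K, ∀ y ∈ K, x * y = y * x) :
    Maximal (fun L : Subfield D => Set.range (algebraMap R D) ⊆ (L : Set D) ∧
      ∀ x ∈ L, ∀ y ∈ L, x * y = y * x) K ↔ Set.centralizer (K : Set D) ⊆ K := by
  constructor
  · intro hmax u hu
    have hcomm : ∀ x ∈ insert u (K : Set D), ∀ y ∈ insert u (K : Set D), x * y = y * x := by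
      rintro x (rfl | hx) y (rfl | hy)
      · rfl
      · exact (hu y hy).symm
      · exact hu x hx
      · exact hmax.1.2 x hx y hy
    let L := centralizer (insert u (K : Set D)).centralizer
    have hKL : insert u (K : Set D) ⊆ L := Set.subset_centralizer_centralizer
    refine hmax.2 (y := L) ⟨?_, Set.centralizer_centralizer_comm_of_comm hcomm⟩
      (fun x hx => hKL (Set.mem_insert_of_mem u hx)) (hKL (Set.mem_insert u _))
    rintro - ⟨c, rfl⟩
    exact Set.algebraMap_mem_centralizer c
  · intro hC
    exact ⟨⟨hK, hKcomm⟩, fun L hL hKL x hx => hC fun k hk => hL.2 k (hKL hk) x hx⟩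

end Subfield

/-- **Lemma (Bien, Lemma 3.0).** Let `D` be a division ring whose center is the field `F`,
with `dim_F D = n ^ 2` finite (so `D` has degree `n` over `F`), and let `K` be a subfield
of `D` containing `F` (in Mathlib, `Subfield D` means a division subring, so we require in
addition that `K` is commutative). Then `dim_F K ≤ n`, and `dim_F K = n` holds if and only
if `K` is a maximal subfield of `D`, i.e. maximal with respect to inclusion among the
(commutative) subfields of `D` containing `F`. -/
theorem finrank_subfield_le_and_eq_iff_maximal
    (F D : Type*) [Field F] [DivisionRing D] [Algebra F D]
    (hcenter : Set.range (algebraMap F D) = Set.center D)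
    [FiniteDimensional F D] (n : ℕ) (hn : Module.finrank F D = n ^ 2)
    (K : Subfield D) (hK : Set.range (algebraMap F D) ⊆ (K : Set D))
    (hKcomm : ∀ x ∈ K, ∀ y ∈ K, x * y = y * x) :
    let i : F →+* K := (algebraMap F D).codRestrict K.toSubring fun x => hK ⟨x, rfl⟩
    let _ : Algebra F K := i.toAlgebra' fun c x =>
      Subtype.ext (hKcomm _ (i c).2 _ x.2)
    Module.finrank F K ≤ n ∧
      (Module.finrank F K = n ↔
        Maximal (fun L : Subfield D => Set.range (algebraMap F D) ⊆ (L : Set D) ∧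
          ∀ x ∈ L, ∀ y ∈ L, x * y = y * x) K) := by
  intro _ _
  have : Algebra.IsCentral F D := ⟨fun x hx => Algebra.mem_bot.mpr (hcenter ▸ hx)⟩
  rw [K.finrank_toSubalgebra hK fun c x => (Algebra.smul_def c (x : D)).symm,
    K.maximal_iff_centralizer_subset hK hKcomm]
  exact ⟨Subalgebra.finrank_le_of_commute (A := K.toSubalgebra hK) hKcomm hn,
    Subalgebra.finrank_eq_iff_centralizer_le (A := K.toSubalgebra hK) hKcomm hn⟩
end

section
/- Let F be a field, n > 2 an integer, a_1, …, a_{n−1} ∈ F, and b_1, …, b_{n−1} ∈ F. Let A ∈ M_n(F) be the matrix whose (i+1, i)-entry is 1 for 1 ≤ i ≤ n−1, whose (i, n)-entry is a_i for 1 ≤ i ≤ n−1, and whose other entries are 0; and let B ∈ M_n(F) be the matrix whose (i, i+1)-entry is b_i for 1 ≤ i ≤ n−1 and whose other entries are 0. Then AB − BA is upper triangular and its diagonal entries are −b_1, b_1 − b_2, b_2 − b_3, …, b_{n−2} − b_{n−1}, b_{n−1} (in that order). -/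
/-!
Write `A = S + C`, with `S` the subdiagonal of ones and `C` the last column of `a`'s. Both `C`
and `B` are upper triangular, so `CB - BC` is upper triangular, and its diagonal entries
`c_ii b_ii - b_ii c_ii` vanish. The remaining part `SB - BS` is diagonal:
`SB = diag(0, b_1, …, b_{n-1})` and `BS = diag(b_1, …, b_{n-1}, 0)`.
-/

open Matrix

namespace Matrix

variable {m R : Type*} [LinearOrder m] [Fintype m]

theorem IsUpperTriangular.mul_apply_self [NonUnitalNonAssocSemiring R] {M N : Matrix m m R}
    (hM : M.IsUpperTriangular) (hN : N.IsUpperTriangular) (i : m) :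
    (M * N) i i = M i i * N i i := by
  rw [mul_apply]
  refine Finset.sum_eq_single i (fun k _ hki => ?_) (by simp)
  rcases hki.lt_or_gt with hk | hk
  · rw [hM hk, zero_mul]
  · rw [hN hk, mul_zero]

theorem IsUpperTriangular.commutator_apply_self [NonUnitalCommRing R] {M N : Matrix m m R}
    (hM : M.IsUpperTriangular) (hN : N.IsUpperTriangular) (i : m) :
    (M * N - N * M) i i = 0 := by
  rw [sub_apply, hM.mul_apply_self hN, hN.mul_apply_self hM, mul_comm, sub_self]

end Matrix

section ShiftMatrices

variable {R : Type*} {n : ℕ}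

def subdiagonalShift [Zero R] [One R] (n : ℕ) : Matrix (Fin n) (Fin n) R :=
  of fun i j => if (i : ℕ) = j + 1 then 1 else 0

def superdiagonal [Zero R] (n : ℕ) (b : ℕ → R) : Matrix (Fin n) (Fin n) R :=
  of fun i j => if (j : ℕ) = i + 1 then b (i + 1) else 0

def lastColumn [Zero R] (n : ℕ) (a : ℕ → R) : Matrix (Fin n) (Fin n) R :=
  of fun i j => if (j : ℕ) = n - 1 ∧ (i : ℕ) < n - 1 then a (i + 1) else 0

theorem superdiagonal_isUpperTriangular [Zero R] (b : ℕ → R) :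
    (superdiagonal n b).IsUpperTriangular := by
  intro i j hji
  simp only [superdiagonal, of_apply]
  exact if_neg (by have : (j : ℕ) < i := hji; omega)

theorem lastColumn_isUpperTriangular [Zero R] (a : ℕ → R) :
    (lastColumn n a).IsUpperTriangular := by
  intro i j hji
  simp only [lastColumn, of_apply]
  exact if_neg (by have : (j : ℕ) < i := hji; omega)

theorem subdiagonalShift_mul_superdiagonal [NonAssocSemiring R] (b : ℕ → R) :
    (subdiagonalShift n : Matrix (Fin n) (Fin n) R) * superdiagonal n b =
      diagonal fun i : Fin n => if (i : ℕ) = 0 then 0 else b i := by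
  ext i j
  simp only [mul_apply, subdiagonalShift, superdiagonal, of_apply, diagonal_apply]
  rw [Fin.sum_univ_eq_sum_range (fun k => (if (i : ℕ) = k + 1 then (1 : R) else 0) *
    if (j : ℕ) = k + 1 then b (k + 1) else 0)]
  simp only [ite_mul, one_mul, zero_mul]
  rw [Finset.sum_eq_single ((i : ℕ) - 1) (fun k _ hk => if_neg (by omega)) (fun h => ?_)]
  · simp only [Fin.ext_iff]
    split_ifs <;> first | rfl | (exfalso; omega) | (congr 1; omega)
  · exact absurd (Finset.mem_range.2 (by omega)) h

theorem superdiagonal_mul_subdiagonalShift [NonAssocSemiring R] (b : ℕ → R) :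
    superdiagonal n b * (subdiagonalShift n : Matrix (Fin n) (Fin n) R) =
      diagonal fun i : Fin n => if (i : ℕ) + 1 < n then b (i + 1) else 0 := by
  ext i j
  simp only [mul_apply, subdiagonalShift, superdiagonal, of_apply, diagonal_apply]
  rw [Fin.sum_univ_eq_sum_range (fun k => (if k = (i : ℕ) + 1 then b (i + 1) else 0) *
    if k = j + 1 then (1 : R) else 0)]
  simp only [ite_mul, zero_mul, Finset.sum_ite_eq', Finset.mem_range, Fin.ext_iff]
  split_ifs <;> first | rfl | (exfalso; omega) | simp

theorem subdiagonalShift_add_lastColumn [AddZeroClass R] [One R] (a : ℕ → R) :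
    subdiagonalShift n + lastColumn n a = of fun i j : Fin n =>
      if (i : ℕ) = j + 1 then 1
      else if (j : ℕ) = n - 1 ∧ (i : ℕ) < n - 1 then a (i + 1)
      else 0 := by
  ext i j
  simp only [Matrix.add_apply, subdiagonalShift, lastColumn, of_apply]
  split_ifs <;> first | simp | omega

end ShiftMatrices

/-- **Computation (from Bien, Lemma 3.3).** Let `F` be a field, `n > 2`, and let
`a 1, …, a (n-1), b 1, …, b (n-1) ∈ F`. Let `A` be the `n × n` matrix (rows and columns
indexed `1, …, n`) whose `(i+1, i)`-entry is `1` for `1 ≤ i ≤ n-1`, whose `(i, n)`-entry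
is `a i` for `1 ≤ i ≤ n-1`, and whose other entries are `0`; and let `B` be the matrix
whose `(i, i+1)`-entry is `b i` for `1 ≤ i ≤ n-1` and whose other entries are `0`. Then
`A * B - B * A` is upper triangular and its diagonal entries are
`-b 1, b 1 - b 2, b 2 - b 3, …, b (n-2) - b (n-1), b (n-1)` in that order.
(Below, `Fin n` gives `0`-based indexing, so index `i : Fin n` corresponds to `i + 1`.) -/
theorem add_commutator_upper_triangular
    (F : Type*) [Field F] (n : ℕ) (hn : 2 < n) (a b : ℕ → F)
    (A B : Matrix (Fin n) (Fin n) F)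
    (hA : A = Matrix.of fun i j : Fin n =>
      if (i : ℕ) = (j : ℕ) + 1 then 1
      else if (j : ℕ) = n - 1 ∧ (i : ℕ) < n - 1 then a ((i : ℕ) + 1)
      else 0)
    (hB : B = Matrix.of fun i j : Fin n =>
      if (j : ℕ) = (i : ℕ) + 1 then b ((i : ℕ) + 1) else 0) :
    (∀ i j : Fin n, (j : ℕ) < (i : ℕ) → (A * B - B * A) i j = 0) ∧
      (∀ i : Fin n, (A * B - B * A) i i =
        if (i : ℕ) = 0 then -b 1
        else if (i : ℕ) = n - 1 then b (n - 1)
        else b (i : ℕ) - b ((i : ℕ) + 1)) := by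
  replace hA := hA.trans (subdiagonalShift_add_lastColumn a).symm
  replace hB : B = superdiagonal n b := hB
  subst hA hB
  have hCu := lastColumn_isUpperTriangular (n := n) a
  have hBu := superdiagonal_isUpperTriangular (n := n) b
  have hcomm : (subdiagonalShift n + lastColumn n a) * superdiagonal n b -
      superdiagonal n b * (subdiagonalShift n + lastColumn n a) =
      diagonal (fun i : Fin n => (if (i : ℕ) = 0 then 0 else b i) -
        if (i : ℕ) + 1 < n then b (i + 1) else 0) +
      (lastColumn n a * superdiagonal n b - superdiagonal n b * lastColumn n a) := by
    rw [add_mul, mul_add, subdiagonalShift_mul_superdiagonal, superdiagonal_mul_subdiagonalShift,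
      ← diagonal_sub]
    abel
  rw [hcomm]
  refine ⟨fun i j hji => ?_, fun i => ?_⟩
  · rw [Matrix.add_apply, diagonal_apply_ne _ (Fin.ne_of_gt hji), (hCu.mul hBu).sub (hBu.mul hCu)
      hji, add_zero]
  · obtain ⟨i, hi⟩ := i
    rw [Matrix.add_apply, diagonal_apply_eq, hCu.commutator_apply_self hBu, add_zero]
    split_ifs <;> first | (exfalso; omega) | (subst_vars; simp)
end
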